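/- Let P be a lattice polygon that is a strictly convex octagon with vertices v_1,...,v_8 ∈ ℤ² such that the only lattice points on the boundary of P are the 8 vertices, and suppose v_1 = (0,1), v_2 = (0,0), v_3 = (1,0). If the internal angle at v_2 between the edges v_1v_2 and v_2v_3 is π/2 and the internal angles at v_1 and at v_3 are each strictly greater than π/2, then (1,1) is an interior point of P. -/

import Mathlib

/-!
Write `v 3 = (a, b)` and `v 7 = (c, d)`. Convexity at `v 2` and `v 0` gives `b, c ≥ 1`, and the
obtuse angles at `v 2` and `v 0` give `a, d ≥ 2`. If `b ≥ 2`, the point `(1, 1)` lies strictly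
inside the triangle `v 2 v 3 v 0`; symmetrically if `c ≥ 2`, with `v 7` in place of `v 3`; and if
`b = c = 1`, it lies strictly inside `v 1 v 3 v 7`. Strict containment in a triangle is tested by
the signs of three cross products, which are continuous, so it gives an interior point.
-/

open EuclideanGeometry

noncomputable def cross4 (x y : EuclideanSpace ℝ (Fin 2)) : ℝ := x 0 * y 1 - x 1 * y 0

def IsLatticePoint4 (x : EuclideanSpace ℝ (Fin 2)) : Prop :=
  ∃ p : ℤ × ℤ, x = ![(p.1 : ℝ), (p.2 : ℝ)]

section Triangle

variable {s : Set (EuclideanSpace ℝ (Fin 2))} {p q r u : EuclideanSpace ℝ (Fin 2)}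

lemma continuous_cross4_sub (a b : EuclideanSpace ℝ (Fin 2)) :
    Continuous fun u => cross4 a (u - b) := by
  unfold cross4; fun_prop

lemma mem_convexHull_of_cross4_pos (hp : p ∈ s) (hq : q ∈ s) (hr : r ∈ s)
    (h₁ : 0 < cross4 (q - p) (u - p)) (h₂ : 0 < cross4 (r - q) (u - q))
    (h₃ : 0 < cross4 (p - r) (u - r)) :
    u ∈ convexHull ℝ s := by
  -- the three cross products are unnormalised barycentric coordinates of `u` (Cramer's rule)
  set w : Fin 3 → ℝ := ![cross4 (r - q) (u - q), cross4 (p - r) (u - r), cross4 (q - p) (u - p)]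
  have hw : 0 < ∑ i, w i := by simp [w, Fin.sum_univ_three]; linarith
  have hcenter : Finset.univ.centerMass w ![p, q, r] = u := by
    have hw' : ∑ i, w i ≠ 0 := hw.ne'
    simp only [Finset.centerMass, Fin.sum_univ_three, w] at hw' ⊢
    ext i; fin_cases i <;> simp [cross4] at hw' ⊢ <;> field_simp <;> ring
  rw [← hcenter]
  refine Finset.univ.centerMass_mem_convexHull (fun i _ => ?_) hw (fun i _ => ?_)
  · fin_cases i <;> simp [w, h₁.le, h₂.le, h₃.le]
  · fin_cases i <;> simpa

lemma mem_interior_convexHull_of_cross4_pos (hp : p ∈ s) (hq : q ∈ s) (hr : r ∈ s)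
    (h₁ : 0 < cross4 (q - p) (u - p)) (h₂ : 0 < cross4 (r - q) (u - q))
    (h₃ : 0 < cross4 (p - r) (u - r)) :
    u ∈ interior (convexHull ℝ s) := by
  let U := {x | 0 < cross4 (q - p) (x - p)} ∩ {x | 0 < cross4 (r - q) (x - q)} ∩
    {x | 0 < cross4 (p - r) (x - r)}
  have hU : IsOpen U := by
    refine .inter (.inter ?_ ?_) ?_ <;> exact isOpen_lt continuous_const (continuous_cross4_sub _ _)
  refine interior_maximal (fun x hx => ?_) hU ⟨⟨h₁, h₂⟩, h₃⟩
  exact mem_convexHull_of_cross4_pos hp hq hr hx.1.1 hx.1.2 hx.2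

end Triangle

lemma InnerProductGeometry.inner_neg_of_pi_div_two_lt_angle {V : Type*}
    [NormedAddCommGroup V] [InnerProductSpace ℝ V] {x y : V}
    (h : Real.pi / 2 < angle x y) : inner ℝ x y < 0 := by
  have hcos : Real.cos (angle x y) < 0 := by
    rw [← Real.cos_pi_div_two]
    exact Real.cos_lt_cos_of_nonneg_of_le_pi (by positivity) (angle_le_pi x y) h
  rw [cos_angle] at hcos
  exact neg_of_div_neg_left hcos (by positivity)

lemma one_one_mem_interior_convexHull {s : Set (EuclideanSpace ℝ (Fin 2))} {a b c d : ℤ}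
    (h₀₀ : !₂[0, 0] ∈ s) (h₁₀ : !₂[1, 0] ∈ s) (h₀₁ : !₂[0, 1] ∈ s)
    (hab : !₂[(a : ℝ), b] ∈ s) (hcd : !₂[(c : ℝ), d] ∈ s)
    (ha : 2 ≤ a) (hb : 1 ≤ b) (hc : 1 ≤ c) (hd : 2 ≤ d) :
    !₂[1, 1] ∈ interior (convexHull ℝ s) := by
  have ha' : (2 : ℝ) ≤ a := by exact_mod_cast ha
  have hd' : (2 : ℝ) ≤ d := by exact_mod_cast hd
  rcases hb.eq_or_lt with rfl | hb
  · rcases hc.eq_or_lt with rfl | hc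
    · refine mem_interior_convexHull_of_cross4_pos h₀₀ hab hcd ?_ ?_ ?_ <;>
        simp [cross4] <;> nlinarith
    · have hc' : (2 : ℝ) ≤ c := by exact_mod_cast hc
      refine mem_interior_convexHull_of_cross4_pos h₁₀ hcd h₀₁ ?_ ?_ ?_ <;>
        simp [cross4] <;> nlinarith
  · have hb' : (2 : ℝ) ≤ b := by exact_mod_cast hb
    refine mem_interior_convexHull_of_cross4_pos h₁₀ hab h₀₁ ?_ ?_ ?_ <;>
      simp [cross4] <;> nlinarith

theorem lattice_octagon_interior_point_general
    (v : ZMod 8 → EuclideanSpace ℝ (Fin 2))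
    (hlat : ∀ i, IsLatticePoint4 (v i))
    (hconv : ∀ i, 0 < cross4 (v (i + 1) - v i) (v (i + 2) - v (i + 1)))
    (h0 : v 0 = ![(0 : ℝ), 1]) (h1 : v 1 = ![(0 : ℝ), 0]) (h2 : v 2 = ![(1 : ℝ), 0])
    (hang0 : Real.pi / 2 < ∠ (v 7) (v 0) (v 1))
    (hang2 : Real.pi / 2 < ∠ (v 1) (v 2) (v 3)) :
    (!₂[(1 : ℝ), 1] : EuclideanSpace ℝ (Fin 2))
      ∈ interior (convexHull ℝ (Set.range v)) := by
  obtain ⟨⟨a, b⟩, h3⟩ := hlat 3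
  obtain ⟨⟨c, d⟩, h7⟩ := hlat 7
  replace h0 : v 0 = !₂[0, 1] := by rw [← h0]
  replace h1 : v 1 = !₂[0, 0] := by rw [← h1]
  replace h2 : v 2 = !₂[1, 0] := by rw [← h2]
  replace h3 : v 3 = !₂[(a : ℝ), b] := by rw [← h3]
  replace h7 : v 7 = !₂[(c : ℝ), d] := by rw [← h7]
  have hb : (0 : ℝ) < b := by
    have h : 0 < cross4 (v 2 - v 1) (v 3 - v 2) := hconv 1
    simpa [cross4, h1, h2, h3] using h
  have hc : (0 : ℝ) < c := by
    have h : 0 < cross4 (v 0 - v 7) (v 1 - v 0) := hconv 7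
    simpa [cross4, h0, h1, h7] using h
  have ha : (1 : ℝ) < a := by
    have := InnerProductGeometry.inner_neg_of_pi_div_two_lt_angle hang2
    simp [h1, h2, h3, PiLp.inner_apply, Fin.sum_univ_two] at this
    linarith
  have hd : (1 : ℝ) < d := by
    have := InnerProductGeometry.inner_neg_of_pi_div_two_lt_angle hang0
    simp [h0, h1, h7, PiLp.inner_apply, Fin.sum_univ_two] at this
    linarith
  exact one_one_mem_interior_convexHull ⟨1, h1⟩ ⟨2, h2⟩ ⟨0, h0⟩ ⟨3, h3⟩ ⟨7, h7⟩
    (by exact_mod_cast ha) (by exact_mod_cast hb) (by exact_mod_cast hc) (by exact_mod_cast hd)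

/-- If `P` is a strictly convex lattice octagon whose only boundary lattice
points are its 8 vertices, with `v 0 = (0,1)`, `v 1 = (0,0)`, `v 2 = (1,0)`, the internal
angle at `v 1` equal to `π/2`, and the internal angles at `v 0` and `v 2` strictly greater
than `π/2`, then `(1,1)` is an interior point of `P`. -/
theorem lattice_octagon_interior_point
    (v : ZMod 8 → EuclideanSpace ℝ (Fin 2))
    (hlat : ∀ i, IsLatticePoint4 (v i))
    (hne : ∀ i, v (i + 1) - v i ≠ 0)
    (hconv : ∀ i, 0 < cross4 (v (i + 1) - v i) (v (i + 2) - v (i + 1)))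
    (hstrict : ∀ i, v i ∉ convexHull ℝ (v '' {j | j ≠ i}))
    (hbd : ∀ (p : ℤ × ℤ) (i : ZMod 8),
      (!₂[(p.1 : ℝ), (p.2 : ℝ)] : EuclideanSpace ℝ (Fin 2)) ∈ segment ℝ (v i) (v (i + 1)) →
        ∃ j : ZMod 8, (!₂[(p.1 : ℝ), (p.2 : ℝ)] : EuclideanSpace ℝ (Fin 2)) = v j)
    (h0 : v 0 = ![(0 : ℝ), 1]) (h1 : v 1 = ![(0 : ℝ), 0]) (h2 : v 2 = ![(1 : ℝ), 0])
    (hang1 : ∠ (v 0) (v 1) (v 2) = Real.pi / 2)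
    (hang0 : Real.pi / 2 < ∠ (v 7) (v 0) (v 1))
    (hang2 : Real.pi / 2 < ∠ (v 1) (v 2) (v 3)) :
    (!₂[(1 : ℝ), 1] : EuclideanSpace ℝ (Fin 2))
      ∈ interior (convexHull ℝ (Set.range v)) :=
  lattice_octagon_interior_point_general v hlat hconv h0 h1 h2 hang0 hang2
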